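/- Let B be a set, let n ≥ 2, let l be a positive integer, let m = l/2 with l even, and let α₀, …, α_{n−1} ∈ F(B) each have reduced word of length l. For each i (indices taken modulo n), let k_i denote the number of cancellations in the product α_i·α_{i+1}, i.e. k_i = (2l − |α_i·α_{i+1}|)/2 where |·| denotes reduced word length. If α₀·α₁·⋯·α_{n−1} = 1 and k₀ = k₁ = ⋯ = k_{n−1} = k, then k ≥ m. -/

import Mathlib

/-!
Write `αᵢ = pᵢ tᵢ` and `αᵢ₊₁ = tᵢ⁻¹ sᵢ` as reduced words, with `|tᵢ| = k` letters cancelling in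
`αᵢ αᵢ₊₁ = pᵢ sᵢ`. If `2k < l`, then `pᵢ` is longer than `k`, so the letters of `αᵢ` that
survive the previous cancellation still cover `tᵢ` and leave part of `pᵢ` as a barrier: by
induction the reduced word of `α₀ ⋯ αⱼ` ends with the last `l - k` letters of `αⱼ`. For
`j = n - 1` this contradicts `α₀ ⋯ αₙ₋₁ = 1`.
-/

namespace FreeGroup

variable {α : Type*}

theorem mk_append_mul_mk_invRev_append (A t C : List (α × Bool)) :
    mk (A ++ t) * mk (invRev t ++ C) = mk (A ++ C) := by
  simp only [← mul_mk, ← inv_mk]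
  group

variable [DecidableEq α]

theorem IsReduced.exists_reduce_append {u v : List (α × Bool)} (hu : IsReduced u)
    (hv : IsReduced v) :
    ∃ p t s, u = p ++ t ∧ v = invRev t ++ s ∧ reduce (u ++ v) = p ++ s := by
  induction u using List.reverseRecOn generalizing v with
  | nil => exact ⟨[], [], v, rfl, rfl, hv.reduce_eq⟩
  | append_singleton u a ih =>
    obtain ⟨x, b⟩ := a
    by_cases hcancel : v.head? = some (x, !b)
    · obtain ⟨v, rfl⟩ : ∃ v', v = (x, !b) :: v' := ⟨v.tail, List.eq_cons_of_mem_head? hcancel⟩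
      obtain ⟨p, t, s, rfl, rfl, hred⟩ := ih (hu.infix (List.infix_append_left ..)) hv.tail
      refine ⟨p, t ++ [(x, b)], s, by simp, by simp [invRev], ?_⟩
      rw [← hred, List.append_assoc, List.singleton_append]
      exact reduce.Step.eq Red.Step.not
    · refine ⟨u ++ [(x, b)], [], v, by simp, by simp [invRev], IsReduced.reduce_eq ?_⟩
      refine List.isChain_append.mpr ⟨hu, hv, ?_⟩
      simp only [List.getLast?_append, List.getLast?_singleton, Option.some_or, Option.mem_def,
        Option.some.injEq, forall_eq']
      rintro ⟨y, c⟩ hb rfl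
      contrapose! hcancel
      simpa [hb, Bool.eq_not_iff, eq_comm] using hcancel

theorem exists_toWord_mul (x y : FreeGroup α) :
    ∃ p t s, x.toWord = p ++ t ∧ y.toWord = invRev t ++ s ∧ (x * y).toWord = p ++ s := by
  rw [toWord_mul]
  exact isReduced_toWord.exists_reduce_append isReduced_toWord

def cancellation (x y : FreeGroup α) : ℕ :=
  (x.toWord.length + y.toWord.length - (x * y).toWord.length) / 2

theorem cancellation_eq_length {x y : FreeGroup α} {p t s : List (α × Bool)}
    (hx : x.toWord = p ++ t) (hy : y.toWord = invRev t ++ s) (hxy : (x * y).toWord = p ++ s) :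
    cancellation x y = t.length := by
  simp only [cancellation, hx, hy, hxy, List.length_append, invRev_length]
  omega

theorem drop_cancellation_isSuffix_toWord_mul {x y z : FreeGroup α}
    (hx : 2 * cancellation x y < x.toWord.length)
    (hz : x.toWord.drop (cancellation x y) <:+ z.toWord) :
    y.toWord.drop (cancellation x y) <:+ (z * y).toWord := by
  obtain ⟨p, t, s, hxw, hyw, hxyw⟩ := exists_toWord_mul x y
  obtain ⟨c, hzw⟩ := hz
  rw [cancellation_eq_length hxw hyw hxyw] at hx hzw ⊢
  have ht : t.length < p.length := by simp only [hxw, List.length_append] at hx; omega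
  have hzw : z.toWord = c ++ p.drop t.length ++ t := by
    rw [← hzw, hxw, List.drop_append_of_le_length ht.le, List.append_assoc]
  have hzy : (z * y).toWord = c ++ p.drop t.length ++ s := by
    rw [← mk_toWord (x := z), ← mk_toWord (x := y), hzw, hyw, mk_append_mul_mk_invRev_append,
      toWord_mk]
    refine IsReduced.reduce_eq (IsReduced.append_overlap ?_ ?_ ?_)
    · exact isReduced_toWord.infix (hzw ▸ List.infix_append_left ..)
    · refine (hxyw ▸ isReduced_toWord).infix ⟨p.take t.length, [], ?_⟩
      rw [List.append_nil, ← List.append_assoc, List.take_append_drop]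
    · simpa using ht
  rw [hzy, hyw, List.drop_left' invRev_length]
  exact List.suffix_append _ _

theorem drop_isSuffix_toWord_prod {L : List (FreeGroup α)} {k : ℕ}
    (hL : L.IsChain fun x y ↦ cancellation x y = k ∧ 2 * k < x.toWord.length) :
    ∀ y ∈ L.getLast?, y.toWord.drop k <:+ L.prod.toWord := by
  induction L using List.reverseRecOn with
  | nil => simp
  | append_singleton L y ih =>
    simp only [List.getLast?_append, List.getLast?_singleton, Option.some_or, Option.mem_def,
      Option.some.injEq, forall_eq', List.prod_append, List.prod_singleton]
    cases hlast : L.getLast? with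
    | none => simpa [List.getLast?_eq_none_iff.mp hlast] using List.drop_suffix _ _
    | some x =>
      obtain ⟨rfl, hx⟩ := (List.isChain_append.mp hL).2.2 x hlast y rfl
      exact drop_cancellation_isSuffix_toWord_mul hx (ih hL.left_of_append x hlast)

end FreeGroup

/-- Let `α₀, …, α_{n-1}` (`n ≥ 2`) be elements of a free group, each with reduced
word of even length `l = 2m > 0`, such that `α₀ ⋯ α_{n-1} = 1` and the number of
cancellations `kᵢ = (2l − |αᵢ · α_{i+1}|)/2` (indices mod `n`) is the same value
`k` for all `i`. Then `k ≥ m`. -/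
theorem cancellations_ge_half_length {B : Type*} [DecidableEq B]
    (n l m k : ℕ) (hn : 2 ≤ n) (hm : m = l / 2)
    (α : Fin n → FreeGroup B)
    (hlen : ∀ i, (α i).toWord.length = l)
    (hprod : (List.ofFn α).prod = 1)
    (hk : ∀ i : Fin n,
      (2 * l - (α i * α ⟨(i.1 + 1) % n, Nat.mod_lt _ (by omega)⟩).toWord.length) / 2
        = k) :
    m ≤ k := by
  by_contra! hkm
  have hchain : (List.ofFn α).IsChain
      fun x y ↦ FreeGroup.cancellation x y = k ∧ 2 * k < x.toWord.length := by
    refine List.isChain_ofFn.mpr fun i hi ↦ ⟨?_, by rw [hlen]; omega⟩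
    have := hk ⟨i, by omega⟩
    simp only [Nat.mod_eq_of_lt hi] at this
    rwa [FreeGroup.cancellation, hlen, hlen, ← two_mul]
  have hlast : α ⟨n - 1, by omega⟩ ∈ (List.ofFn α).getLast? := by
    simp [List.getLast?_eq_getElem?, show n - 1 < n by omega]
  have hsuffix := FreeGroup.drop_isSuffix_toWord_prod hchain _ hlast
  rw [hprod, FreeGroup.toWord_one, List.suffix_nil, List.drop_eq_nil_iff, hlen] at hsuffix
  omega
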